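/- arXiv:2602.03869 — 8 statements merged into one kernel-verified Lean document; each statement's English description precedes it below -/
import Mathlib

section
/- Fix x₀ ∈ (Fin n → ℝ) with D(x₀) ≠ 0. Then the following two conditions are equivalent: (i) for every ν ∈ {1,…,κ} and all vectors v, δ ∈ (Fin n → ℝ) such that Σ_{j=1}^{n} a_{μ,j}(x₀)·v_j = 0 for all μ ∈ {1,…,κ} and Σ_{j=1}^{n} a_{μ,j}(x₀)·δ_j = 0 for all μ ∈ {1,…,κ}, one has Σ_{i=1}^{n} Σ_{j=1}^{n} A^{(ν)}_{i,j}(x₀)·v_j·δ_i = 0; (ii) μ^{(ν)}_{i,j}(x₀) = 0 for every ν ∈ {1,…,κ} and all i, j ∈ {1,…,n−κ}. -/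
open Matrix BigOperators

/-- The index `κ + i` of `Fin n`, for `i : Fin (n - κ)`. -/
def shiftIdx {κ n : ℕ} (h : κ < n) (i : Fin (n - κ)) : Fin n :=
  ⟨κ + i.1, by have := i.2; omega⟩

/-- `D`: determinant of the `κ × κ` submatrix formed by the first `κ` columns of `a`. -/
noncomputable def detD {κ n : ℕ} (h : κ < n) (a : Matrix (Fin κ) (Fin n) ℝ) : ℝ :=
  Matrix.det (Matrix.of fun ν μ : Fin κ => a ν (Fin.castLE h.le μ))

/-- `D_r(ℓ)`: as `D`, but with the `r`-th column replaced by the `ℓ`-th column of `a`. -/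
noncomputable def detDr {κ n : ℕ} (h : κ < n) (a : Matrix (Fin κ) (Fin n) ℝ)
    (r : Fin κ) (ℓ : Fin n) : ℝ :=
  Matrix.det (Matrix.of fun ν μ : Fin κ => a ν (if μ = r then ℓ else Fin.castLE h.le μ))

/-- `D_{r,s}(ℓ,m)`: as `D`, but with the `r`-th and `s`-th columns replaced by the
`ℓ`-th and `m`-th columns of `a`. -/
noncomputable def detDrs {κ n : ℕ} (h : κ < n) (a : Matrix (Fin κ) (Fin n) ℝ)
    (r s : Fin κ) (ℓ m : Fin n) : ℝ :=
  Matrix.det (Matrix.of fun ν μ : Fin κ =>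
    a ν (if μ = r then ℓ else if μ = s then m else Fin.castLE h.le μ))

/-- The coefficients `μ_{i,j}` built from the constraint matrix `a` and a
skew-symmetric matrix `A`. -/
noncomputable def muCoef {κ n : ℕ} (h : κ < n) (a : Matrix (Fin κ) (Fin n) ℝ)
    (A : Matrix (Fin n) (Fin n) ℝ) (i j : Fin (n - κ)) : ℝ :=
  (∑ r : Fin κ,
      (A (Fin.castLE h.le r) (shiftIdx h j) * detDr h a r (shiftIdx h i)
        - A (Fin.castLE h.le r) (shiftIdx h i) * detDr h a r (shiftIdx h j)))
    - A (shiftIdx h i) (shiftIdx h j) * detD h a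
    - ∑ r : Fin κ, ∑ s : Fin κ,
        if r < s then
          A (Fin.castLE h.le r) (Fin.castLE h.le s)
            * detDrs h a r s (shiftIdx h i) (shiftIdx h j)
        else 0

/-- The skew-symmetric matrix `A^{(ν)}(x)` with entries
`A^{(ν)}_{i,j}(x) = ∂a_{ν,i}/∂x_j(x) − ∂a_{ν,j}/∂x_i(x)`. -/
noncomputable def Amat {κ n : ℕ} (a : (Fin n → ℝ) → Matrix (Fin κ) (Fin n) ℝ)
    (x : Fin n → ℝ) (ν : Fin κ) : Matrix (Fin n) (Fin n) ℝ :=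
  fun i j => fderiv ℝ (fun y => a y ν i) x (Pi.single j 1)
    - fderiv ℝ (fun y => a y ν j) x (Pi.single i 1)

/-!
Let `M` be the leading `κ × κ` block of `a(x₀)`, invertible since `D ≠ 0`, and
`c_ℓ = M⁻¹ a_{·,ℓ}`. The constraint kernel has the basis `w_i = e_{κ+i} - Σ_r c_{κ+i}(r) e_r`.
Cramer's rule gives `D_r(ℓ) = D c_ℓ(r)` and, by multilinearity and one column swap,
`D_{r,s}(ℓ,m) = D (c_ℓ(r) c_m(s) - c_ℓ(s) c_m(r))`. Substituting these and pairing the terms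
`r < s` with `s < r` through the skew-symmetry of `A^{(ν)}` yields
`μ^{(ν)}_{i,j} = -D · w_iᵀ A^{(ν)} w_j`, so both conditions say that the bilinear form of
`A^{(ν)}` vanishes on the kernel.
-/

namespace Matrix
variable {R ι : Type*} [CommRing R] [Fintype ι] [DecidableEq ι]

omit [DecidableEq ι] in
theorem mulVec_eq_sum_smul_col (M : Matrix ι ι R) (c : ι → R) :
    M *ᵥ c = ∑ i, c i • M.col i := by
  ext k; simp [mulVec, dotProduct, Finset.sum_apply, mul_comm]

theorem det_updateCol_mulVec (M : Matrix ι ι R) (r : ι) (c : ι → R) :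
    (M.updateCol r (M *ᵥ c)).det = M.det * c r := by
  have := det_updateCol_sum M r c
  rw [smul_eq_mul, mul_comm] at this
  rw [← this, mulVec_eq_sum_smul_col]
  congr; ext k; simp [Finset.sum_apply]

theorem det_updateCol_mulVec_updateCol_mulVec (M : Matrix ι ι R) {r s : ι} (hrs : r ≠ s)
    (c d : ι → R) :
    ((M.updateCol r (M *ᵥ c)).updateCol s (M *ᵥ d)).det = M.det * (c r * d s - c s * d r) := by
  set N := M.updateCol r (M *ᵥ c) with hN
  have hcol : ∀ k ≠ r, M.col k = N.col k := fun k hk => by ext i; simp [hN, hk]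
  have hterm : ∀ k, (N.updateCol s (M.col k)).det
      = (if k = s then M.det * c r else 0) - (if k = r then M.det * c s else 0) := by
    intro k
    by_cases hks : k = s
    · subst hks
      rw [hcol k (Ne.symm hrs), if_pos rfl, if_neg (Ne.symm hrs), sub_zero]
      exact (congrArg det (updateCol_eq_self N k)).trans (det_updateCol_mulVec M r c)
    by_cases hkr : k = r
    · subst hkr
      have hswap : N.updateCol s (M.col k)
          = (M.updateCol s (M *ᵥ c)).submatrix id (Equiv.swap k s) := by
        ext i j
        rcases eq_or_ne j k with rfl | hjk
        · simp [hN, hrs]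
        rcases eq_or_ne j s with rfl | hjs
        · simp [hN, hrs]
        · simp [hN, hjk, hjs, Equiv.swap_apply_of_ne_of_ne hjk hjs]
      rw [hswap, det_permute', det_updateCol_mulVec, Equiv.Perm.sign_swap hrs]
      simp [hks]
    · rw [hcol k hkr, if_neg hks, if_neg hkr, sub_zero]
      exact det_updateCol_eq_zero hks
  rw [mulVec_eq_sum_smul_col M d, ← cramer_apply, map_sum]
  simp only [map_smul, Finset.sum_apply, Pi.smul_apply, cramer_apply, hterm, smul_eq_mul,
    mul_sub, mul_ite, mul_zero, Finset.sum_sub_distrib, Finset.sum_ite_eq', Finset.mem_univ,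
    if_true]
  ring

end Matrix

theorem sum_sum_mul_mul_eq_sum_sum_lt {R ι : Type*} [CommRing R] [Fintype ι] [LinearOrder ι]
    (G : ι → ι → R) (hG : ∀ r s, G s r = -G r s) (hdiag : ∀ r, G r r = 0) (x y : ι → R) :
    ∑ r, ∑ s, G r s * x r * y s
      = ∑ r, ∑ s, if r < s then G r s * (x r * y s - x s * y r) else 0 := by
  have hsplit : ∀ r s, G r s * x r * y s
      = (if r < s then G r s * x r * y s else 0) + (if s < r then G r s * x r * y s else 0) := by
    intro r s
    rcases lt_trichotomy r s with hrs | rfl | hsr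
    · simp [hrs, hrs.not_gt]
    · simp [hdiag]
    · simp [hsr, hsr.not_gt]
  have hflip : ∑ r, ∑ s, (if r < s then G r s * x s * y r else 0)
      = -∑ r, ∑ s, (if s < r then G r s * x r * y s else 0) := by
    rw [Finset.sum_comm, ← Finset.sum_neg_distrib]
    refine Finset.sum_congr rfl fun s _ => ?_
    rw [← Finset.sum_neg_distrib]
    refine Finset.sum_congr rfl fun r _ => ?_
    split_ifs
    · rw [hG s r]; ring
    · simp
  have hrhs : ∀ r s, (if r < s then G r s * (x r * y s - x s * y r) else 0)
      = (if r < s then G r s * x r * y s else 0) - (if r < s then G r s * x s * y r else 0) := by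
    intro r s; split_ifs <;> ring
  rw [Finset.sum_congr rfl fun r _ => Finset.sum_congr rfl fun s _ => hsplit r s]
  simp only [hrhs, Finset.sum_sub_distrib, Finset.sum_add_distrib, hflip, sub_neg_eq_add]

section Constraints
variable {κ n : ℕ} (h : κ < n)

theorem sum_eq_sum_castLE_add_sum_shiftIdx {M : Type*} [AddCommMonoid M] (f : Fin n → M) :
    ∑ q, f q = ∑ r : Fin κ, f (Fin.castLE h.le r) + ∑ i : Fin (n - κ), f (shiftIdx h i) := by
  rw [← Equiv.sum_comp (finSumFinEquiv.trans (finCongr (by omega : κ + (n - κ) = n))) f,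
    Fintype.sum_sum_type]
  rfl

theorem castLE_ne_shiftIdx (r : Fin κ) (i : Fin (n - κ)) : Fin.castLE h.le r ≠ shiftIdx h i := by
  simp [shiftIdx, Fin.ext_iff]; omega

theorem shiftIdx_injective : Function.Injective (shiftIdx h) := fun i j hij => by
  simpa [shiftIdx, Fin.ext_iff] using hij

variable (a : Matrix (Fin κ) (Fin n) ℝ)

def leadingBlock : Matrix (Fin κ) (Fin κ) ℝ := a.submatrix id (Fin.castLE h.le)

theorem detD_eq_det_leadingBlock : detD h a = (leadingBlock h a).det := rfl

theorem detDr_eq_det_updateCol (r : Fin κ) (ℓ : Fin n) :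
    detDr h a r ℓ = ((leadingBlock h a).updateCol r (a.col ℓ)).det := by
  unfold detDr leadingBlock
  congr 1; ext ν μ
  by_cases hμ : μ = r <;> simp [hμ]

theorem detDrs_eq_det_updateCol_updateCol {r s : Fin κ} (hrs : r ≠ s) (ℓ m : Fin n) :
    detDrs h a r s ℓ m
      = (((leadingBlock h a).updateCol r (a.col ℓ)).updateCol s (a.col m)).det := by
  unfold detDrs leadingBlock
  congr 1; ext ν μ
  rcases eq_or_ne μ r with rfl | hμr
  · simp [hrs]
  · rcases eq_or_ne μ s with rfl | hμs
    · simp [hμr]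
    · simp [hμr, hμs]

noncomputable def colCoeff (ℓ : Fin n) : Fin κ → ℝ := (leadingBlock h a)⁻¹ *ᵥ a.col ℓ

noncomputable def kernelVec (i : Fin (n - κ)) : Fin n → ℝ :=
  Pi.single (shiftIdx h i) 1
    - ∑ r, colCoeff h a (shiftIdx h i) r • Pi.single (Fin.castLE h.le r) 1

theorem kernelVec_shiftIdx (i m : Fin (n - κ)) :
    kernelVec h a i (shiftIdx h m) = (Pi.single i 1 : Fin (n - κ) → ℝ) m := by
  simp [kernelVec, Finset.sum_apply, Pi.single_apply, castLE_ne_shiftIdx h,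
    (shiftIdx_injective h).eq_iff, eq_comm]

variable {h a} (hD : detD h a ≠ 0)
include hD

theorem leadingBlock_mulVec_colCoeff (ℓ : Fin n) :
    leadingBlock h a *ᵥ colCoeff h a ℓ = a.col ℓ := by
  rw [colCoeff, mulVec_mulVec, mul_nonsing_inv (leadingBlock h a) (isUnit_iff_ne_zero.2 hD),
    one_mulVec]

theorem detDr_eq_mul_colCoeff (r : Fin κ) (ℓ : Fin n) :
    detDr h a r ℓ = detD h a * colCoeff h a ℓ r := by
  rw [detDr_eq_det_updateCol, ← leadingBlock_mulVec_colCoeff hD, det_updateCol_mulVec,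
    detD_eq_det_leadingBlock]

theorem detDrs_eq_mul_colCoeff {r s : Fin κ} (hrs : r ≠ s) (ℓ m : Fin n) :
    detDrs h a r s ℓ m = detD h a
      * (colCoeff h a ℓ r * colCoeff h a m s - colCoeff h a ℓ s * colCoeff h a m r) := by
  rw [detDrs_eq_det_updateCol_updateCol h a hrs, ← leadingBlock_mulVec_colCoeff hD,
    ← leadingBlock_mulVec_colCoeff hD, det_updateCol_mulVec_updateCol_mulVec _ hrs,
    detD_eq_det_leadingBlock]

theorem mulVec_kernelVec (i : Fin (n - κ)) : a *ᵥ kernelVec h a i = 0 := by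
  have hcol := leadingBlock_mulVec_colCoeff hD (shiftIdx h i)
  rw [mulVec_eq_sum_smul_col] at hcol
  simp only [kernelVec, mulVec_sub, mulVec_sum, mulVec_smul, mulVec_single_one]
  rw [← hcol]
  exact sub_self _

theorem eq_zero_of_mulVec_eq_zero_of_shiftIdx {u : Fin n → ℝ} (hu : a *ᵥ u = 0)
    (htail : ∀ m, u (shiftIdx h m) = 0) : u = 0 := by
  have hhead : leadingBlock h a *ᵥ (u ∘ Fin.castLE h.le) = 0 := by
    ext μ
    have := congrFun hu μ
    simp only [mulVec, dotProduct, sum_eq_sum_castLE_add_sum_shiftIdx h, htail, mul_zero,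
      Finset.sum_const_zero, add_zero] at this
    exact this
  have hhead0 := eq_zero_of_mulVec_eq_zero hD hhead
  ext q
  by_cases hq : q.1 < κ
  · exact congrFun hhead0 ⟨q.1, hq⟩
  · simpa [shiftIdx, Fin.ext_iff, Nat.add_sub_cancel' (not_lt.1 hq)]
      using htail ⟨q.1 - κ, by omega⟩

theorem eq_sum_smul_kernelVec {v : Fin n → ℝ} (hv : a *ᵥ v = 0) :
    v = ∑ m, v (shiftIdx h m) • kernelVec h a m := by
  rw [← sub_eq_zero]
  refine eq_zero_of_mulVec_eq_zero_of_shiftIdx hD ?_ fun m => ?_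
  · simp [mulVec_sub, mulVec_sum, mulVec_smul, mulVec_kernelVec hD, hv]
  · simp [Finset.sum_apply, kernelVec_shiftIdx, Pi.single_apply]

theorem forall_dotProduct_mulVec_eq_zero_iff (A : Matrix (Fin n) (Fin n) ℝ) :
    (∀ u v, a *ᵥ u = 0 → a *ᵥ v = 0 → u ⬝ᵥ (A *ᵥ v) = 0)
      ↔ ∀ i j, kernelVec h a i ⬝ᵥ (A *ᵥ kernelVec h a j) = 0 := by
  refine ⟨fun H i j => H _ _ (mulVec_kernelVec hD i) (mulVec_kernelVec hD j),
    fun H u v hu hv => ?_⟩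
  rw [eq_sum_smul_kernelVec hD hu, eq_sum_smul_kernelVec hD hv]
  simp [sum_dotProduct, dotProduct_sum, mulVec_sum, mulVec_smul, H]

end Constraints

section Pairing
variable {κ n : ℕ} (h : κ < n) (a : Matrix (Fin κ) (Fin n) ℝ) (A : Matrix (Fin n) (Fin n) ℝ)

theorem kernelVec_dotProduct_mulVec_kernelVec (i j : Fin (n - κ)) :
    kernelVec h a i ⬝ᵥ (A *ᵥ kernelVec h a j)
      = A (shiftIdx h i) (shiftIdx h j)
        - ∑ s, A (shiftIdx h i) (Fin.castLE h.le s) * colCoeff h a (shiftIdx h j) s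
        - ∑ r, A (Fin.castLE h.le r) (shiftIdx h j) * colCoeff h a (shiftIdx h i) r
        + ∑ r, ∑ s, A (Fin.castLE h.le r) (Fin.castLE h.le s)
            * colCoeff h a (shiftIdx h i) r * colCoeff h a (shiftIdx h j) s := by
  simp only [kernelVec, mulVec_sub, mulVec_sum, mulVec_smul, mulVec_single_one, sub_dotProduct,
    dotProduct_sub, sum_dotProduct, dotProduct_sum, smul_dotProduct, dotProduct_smul,
    single_one_dotProduct, smul_eq_mul, col_apply, mul_sub, Finset.mul_sum, Finset.sum_sub_distrib]
  rw [Finset.sum_comm (f := fun x y => colCoeff h a (shiftIdx h j) x * _)]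
  simp only [mul_comm, mul_left_comm]
  ring

variable {h a A} (hD : detD h a ≠ 0) (hA : ∀ p q, A q p = -A p q) (hAdiag : ∀ p, A p p = 0)
include hD hA hAdiag

theorem muCoef_eq_neg_detD_mul (i j : Fin (n - κ)) :
    muCoef h a A i j = -detD h a * (kernelVec h a i ⬝ᵥ (A *ᵥ kernelVec h a j)) := by
  set ci := colCoeff h a (shiftIdx h i)
  set cj := colCoeff h a (shiftIdx h j)
  have hpairs : ∑ r, ∑ s, (if r < s then A (Fin.castLE h.le r) (Fin.castLE h.le s)
        * detDrs h a r s (shiftIdx h i) (shiftIdx h j) else 0)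
      = detD h a * ∑ r, ∑ s, A (Fin.castLE h.le r) (Fin.castLE h.le s) * ci r * cj s := by
    have hskew := sum_sum_mul_mul_eq_sum_sum_lt
      (fun r s => A (Fin.castLE h.le r) (Fin.castLE h.le s)) (fun r s => hA _ _)
      (fun r => hAdiag _) ci cj
    beta_reduce at hskew
    rw [hskew, Finset.mul_sum]
    refine Finset.sum_congr rfl fun r _ => ?_
    rw [Finset.mul_sum]
    refine Finset.sum_congr rfl fun s _ => ?_
    split_ifs with hrs
    · rw [detDrs_eq_mul_colCoeff hD hrs.ne]; ring
    · simp
  have hcross : ∑ s, A (shiftIdx h i) (Fin.castLE h.le s) * cj s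
      = -∑ s, A (Fin.castLE h.le s) (shiftIdx h i) * cj s := by
    simp only [hA (Fin.castLE h.le _), neg_mul, Finset.sum_neg_distrib]
  rw [muCoef, kernelVec_dotProduct_mulVec_kernelVec, hpairs, hcross]
  simp only [detDr_eq_mul_colCoeff hD, mul_left_comm _ (detD h a), ← Finset.mul_sum,
    Finset.sum_sub_distrib]
  ring

end Pairing

theorem lagrangian_derivative_vanishes_iff_mu_zero_general
    (κ n : ℕ) (h : κ < n)
    (a : (Fin n → ℝ) → Matrix (Fin κ) (Fin n) ℝ)
    (x₀ : Fin n → ℝ)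
    (hD : detD h (a x₀) ≠ 0) :
    (∀ ν : Fin κ, ∀ v δ : Fin n → ℝ,
        (∀ μ : Fin κ, ∑ j, a x₀ μ j * v j = 0) →
        (∀ μ : Fin κ, ∑ j, a x₀ μ j * δ j = 0) →
        ∑ i, ∑ j, Amat a x₀ ν i j * v j * δ i = 0)
      ↔ (∀ ν : Fin κ, ∀ i j : Fin (n - κ), muCoef h (a x₀) (Amat a x₀ ν) i j = 0) := by
  have hker (v : Fin n → ℝ) : (∀ μ, ∑ j, a x₀ μ j * v j = 0) ↔ a x₀ *ᵥ v = 0 := funext_iff.symm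
  have hform (ν : Fin κ) (v δ : Fin n → ℝ) :
      ∑ i, ∑ j, Amat a x₀ ν i j * v j * δ i = δ ⬝ᵥ (Amat a x₀ ν *ᵥ v) := by
    simp only [dotProduct, mulVec, Finset.mul_sum]
    exact Finset.sum_congr rfl fun i _ => Finset.sum_congr rfl fun j _ => by ring
  have hskew (ν : Fin κ) (p q : Fin n) : Amat a x₀ ν q p = -Amat a x₀ ν p q := by
    simp only [Amat]; ring
  have hdiag (ν : Fin κ) (p : Fin n) : Amat a x₀ ν p p = 0 := sub_self _
  simp only [hker, hform, muCoef_eq_neg_detD_mul hD (hskew _) (hdiag _), mul_eq_zero, neg_eq_zero,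
    hD, false_or]
  refine forall_congr' fun ν => ?_
  rw [← forall_dotProduct_mulVec_eq_zero_iff hD, forall_comm]
  exact forall₂_congr fun _ _ => imp.swap

/-- Main theorem: for linear homogeneous constraints with coefficient matrix `a(x)`,
at a point `x₀` where `D(x₀) ≠ 0`, the condition
`Σ_{i,j} A^{(ν)}_{i,j}(x₀) v_j δ_i = 0` for all constraint-annihilated `v, δ` and all `ν`
holds if and only if all coefficients `μ^{(ν)}_{i,j}(x₀)` vanish. -/
theorem lagrangian_derivative_vanishes_iff_mu_zero
    (κ n : ℕ) (h : κ < n)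
    (a : (Fin n → ℝ) → Matrix (Fin κ) (Fin n) ℝ)
    (ha : ∀ (ν : Fin κ) (j : Fin n), Differentiable ℝ (fun x => a x ν j))
    (x₀ : Fin n → ℝ)
    (hD : detD h (a x₀) ≠ 0) :
    (∀ ν : Fin κ, ∀ v δ : Fin n → ℝ,
        (∀ μ : Fin κ, ∑ j, a x₀ μ j * v j = 0) →
        (∀ μ : Fin κ, ∑ j, a x₀ μ j * δ j = 0) →
        ∑ i, ∑ j, Amat a x₀ ν i j * v j * δ i = 0)
      ↔ (∀ ν : Fin κ, ∀ i j : Fin (n - κ), muCoef h (a x₀) (Amat a x₀ ν) i j = 0) :=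
  lagrangian_derivative_vanishes_iff_mu_zero_general κ n h a x₀ hD
end

section
/- For every t ∈ ℝ, δᵥg(t) − (d/dt)[δ꜀g](t) = Σ_{i=1}^{n} (∂g/∂v_i)(q(t), q'(t), t)·(ξ_i(t) − η_i'(t)) − Σ_{i=1}^{n} 𝒟ᵢg(t)·η_i(t). (This is the transposition rule relating the total variation, the Chetaev variation and the Lagrangian derivative of a constraint function along a motion.) -/
/-!
The identity is the Leibniz rule `(δ꜀g)' = Σ_i ((∂g/∂v_i)' η_i + (∂g/∂v_i) η_i')`, rearranged;
the `C²` regularity of `g` and `q` is what makes `t ↦ (∂g/∂v_i)(q(t), q'(t), t)` differentiable.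
-/

open BigOperators

variable {n : ℕ}

/-- Partial derivative of a constraint function `g(x, v, t)` with respect to `x_i`. -/
noncomputable def pdx (g : (Fin n → ℝ) × (Fin n → ℝ) × ℝ → ℝ) (i : Fin n)
    (p : (Fin n → ℝ) × (Fin n → ℝ) × ℝ) : ℝ :=
  fderiv ℝ g p (Pi.single i 1, 0, 0)

/-- Partial derivative of a constraint function `g(x, v, t)` with respect to `v_i`. -/
noncomputable def pdv (g : (Fin n → ℝ) × (Fin n → ℝ) × ℝ → ℝ) (i : Fin n)
    (p : (Fin n → ℝ) × (Fin n → ℝ) × ℝ) : ℝ :=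
  fderiv ℝ g p (0, Pi.single i 1, 0)

/-- The Chetaev variation `δ꜀g(t) = Σ_i (∂g/∂v_i)(q(t), q'(t), t) · η_i(t)`. -/
noncomputable def chetaevVar (g : (Fin n → ℝ) × (Fin n → ℝ) × ℝ → ℝ)
    (q η : ℝ → Fin n → ℝ) (t : ℝ) : ℝ :=
  ∑ i, pdv g i (q t, deriv q t, t) * η t i

/-- The total variation
`δᵥg(t) = Σ_i (∂g/∂x_i)(q(t), q'(t), t) · η_i(t) + Σ_i (∂g/∂v_i)(q(t), q'(t), t) · ξ_i(t)`. -/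
noncomputable def totalVar (g : (Fin n → ℝ) × (Fin n → ℝ) × ℝ → ℝ)
    (q η ξ : ℝ → Fin n → ℝ) (t : ℝ) : ℝ :=
  ∑ i, pdx g i (q t, deriv q t, t) * η t i + ∑ i, pdv g i (q t, deriv q t, t) * ξ t i

/-- The Lagrangian derivative
`𝒟ᵢg(t) = (d/dt)[(∂g/∂v_i)(q(t), q'(t), t)] − (∂g/∂x_i)(q(t), q'(t), t)`. -/
noncomputable def lagD (g : (Fin n → ℝ) × (Fin n → ℝ) × ℝ → ℝ)
    (q : ℝ → Fin n → ℝ) (i : Fin n) (t : ℝ) : ℝ :=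
  deriv (fun s => pdv g i (q s, deriv q s, s)) t - pdx g i (q t, deriv q t, t)

theorem DifferentiableAt.pdv {g : (Fin n → ℝ) × (Fin n → ℝ) × ℝ → ℝ} (hg : ContDiff ℝ 2 g)
    {c : ℝ → (Fin n → ℝ) × (Fin n → ℝ) × ℝ} {t : ℝ} (hc : DifferentiableAt ℝ c t) (i : Fin n) :
    DifferentiableAt ℝ (fun s => pdv g i (c s)) t := by
  have hfd : Differentiable ℝ (fderiv ℝ g) :=
    (hg.fderiv_right (m := 1) (by norm_num)).differentiable one_ne_zero
  exact ((hfd _).comp t hc).clm_apply (differentiableAt_const _)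

theorem ContDiff.differentiable_jet {q : ℝ → Fin n → ℝ} (hq : ContDiff ℝ 2 q) :
    Differentiable ℝ (fun s => (q s, deriv q s, s)) :=
  (hq.differentiable two_ne_zero).prodMk (hq.differentiable_deriv_two.prodMk differentiable_id)

theorem deriv_chetaevVar {g : (Fin n → ℝ) × (Fin n → ℝ) × ℝ → ℝ} {q η : ℝ → Fin n → ℝ} {t : ℝ}
    (hpdv : ∀ i, DifferentiableAt ℝ (fun s => pdv g i (q s, deriv q s, s)) t)
    (hη : DifferentiableAt ℝ η t) :
    deriv (chetaevVar g q η) t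
      = ∑ i, (deriv (fun s => pdv g i (q s, deriv q s, s)) t * η t i
          + pdv g i (q t, deriv q t, t) * deriv (fun s => η s i) t) := by
  have hηi (i : Fin n) : DifferentiableAt ℝ (fun s => η s i) t := differentiableAt_pi.mp hη i
  exact (HasDerivAt.fun_sum fun i _ =>
    (hpdv i).hasDerivAt.mul (hηi i).hasDerivAt).deriv

theorem transposition_rule_general
    (g : (Fin n → ℝ) × (Fin n → ℝ) × ℝ → ℝ) (hg : ContDiff ℝ 2 g)
    (q : ℝ → Fin n → ℝ) (hq : ContDiff ℝ 2 q)
    (η ξ : ℝ → Fin n → ℝ) (hη : Differentiable ℝ η)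
    (t : ℝ) :
    totalVar g q η ξ t - deriv (chetaevVar g q η) t
      = ∑ i, pdv g i (q t, deriv q t, t) * (ξ t i - deriv (fun s => η s i) t)
        - ∑ i, lagD g q i t * η t i := by
  rw [deriv_chetaevVar (fun i => hq.differentiable_jet.differentiableAt.pdv hg i) hη.differentiableAt]
  simp only [totalVar, lagD, sub_mul, mul_sub, Finset.sum_add_distrib, Finset.sum_sub_distrib]
  ring

/-- The transposition rule: the difference between the total variation and the time
derivative of the Chetaev variation equals
`Σ_i (∂g/∂v_i)(ξ_i − η_i') − Σ_i 𝒟ᵢg · η_i`. -/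
theorem transposition_rule
    (g : (Fin n → ℝ) × (Fin n → ℝ) × ℝ → ℝ) (hg : ContDiff ℝ 2 g)
    (q : ℝ → Fin n → ℝ) (hq : ContDiff ℝ 2 q)
    (η ξ : ℝ → Fin n → ℝ) (hη : Differentiable ℝ η) (hξ : Differentiable ℝ ξ)
    (t : ℝ) :
    totalVar g q η ξ t - deriv (chetaevVar g q η) t
      = ∑ i, pdv g i (q t, deriv q t, t) * (ξ t i - deriv (fun s => η s i) t)
        - ∑ i, lagD g q i t * η t i :=
  transposition_rule_general g hg q hq η ξ hη t
end

section
/- Assume the commutation rule ξ(t) = η'(t) holds for all t ∈ ℝ and the Chetaev condition δ꜀g(t) = 0 holds for all t ∈ ℝ. Then for every t ∈ ℝ, δᵥg(t) = − Σ_{i=1}^{n} 𝒟ᵢg(t)·η_i(t) (the Hölder vakonomic variation identity). -/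
open BigOperators

variable {n : ℕ}

/-! Differentiating the Chetaev condition `∑ᵢ (∂g/∂vᵢ) ηᵢ ≡ 0` along the curve by the product
rule trades `∑ᵢ (∂g/∂vᵢ) η̇ᵢ` for `-∑ᵢ (d/dt ∂g/∂vᵢ) ηᵢ`; with `ξ = η̇` this turns `δᵥg` into
`-∑ᵢ 𝒟ᵢg ηᵢ`. -/

theorem sum_mul_deriv_eq_neg_sum_deriv_mul {𝕜 ι : Type*} [NontriviallyNormedField 𝕜]
    [Fintype ι] {f : ι → 𝕜 → 𝕜} {η : 𝕜 → ι → 𝕜} {t : 𝕜}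
    (hf : ∀ i, DifferentiableAt 𝕜 (f i) t) (hη : DifferentiableAt 𝕜 η t) (h0 : ∀ s, ∑ i, f i s * η s i = 0) :
    ∑ i, f i t * deriv η t i = -∑ i, deriv (f i) t * η t i := by
  have hsum : HasDerivAt (fun s => ∑ i, f i s * η s i)
      (∑ i, (deriv (f i) t * η t i + f i t * deriv η t i)) t :=
    HasDerivAt.fun_sum fun i _ => (hf i).hasDerivAt.mul (hasDerivAt_pi.mp hη.hasDerivAt i)
  have hzero : ∑ i, (deriv (f i) t * η t i + f i t * deriv η t i) = 0 :=
    hsum.unique (by simpa only [funext h0] using hasDerivAt_const t (0 : 𝕜))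
  rw [Finset.sum_add_distrib, add_comm] at hzero
  exact eq_neg_of_add_eq_zero_left hzero

theorem ContDiff.differentiable_fderiv_apply {𝕜 E F : Type*} [NontriviallyNormedField 𝕜]
    [NormedAddCommGroup E] [NormedSpace 𝕜 E] [NormedAddCommGroup F] [NormedSpace 𝕜 F]
    {g : E → F} (hg : ContDiff 𝕜 2 g) (w : E) : Differentiable 𝕜 (fun p => fderiv 𝕜 g p w) :=
  ((hg.fderiv_right (by norm_num)).differentiable one_ne_zero).clm_apply
    (differentiable_const w)

theorem differentiable_pdv_along {g : (Fin n → ℝ) × (Fin n → ℝ) × ℝ → ℝ} (hg : ContDiff ℝ 2 g)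
    {q : ℝ → Fin n → ℝ} (hq : ContDiff ℝ 2 q) (i : Fin n) :
    Differentiable ℝ (fun s => pdv g i (q s, deriv q s, s)) :=
  (hg.differentiable_fderiv_apply _).comp
    ((hq.differentiable two_ne_zero).prodMk (hq.differentiable_deriv_two.prodMk differentiable_id))

theorem holder_vakonomic_variation_general
    (g : (Fin n → ℝ) × (Fin n → ℝ) × ℝ → ℝ) (hg : ContDiff ℝ 2 g)
    (q : ℝ → Fin n → ℝ) (hq : ContDiff ℝ 2 q)
    (η ξ : ℝ → Fin n → ℝ) (hη : Differentiable ℝ η)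
    (hcomm : ∀ t : ℝ, ξ t = deriv η t)
    (hchet : ∀ t : ℝ, chetaevVar g q η t = 0)
    (t : ℝ) :
    totalVar g q η ξ t = - ∑ i, lagD g q i t * η t i := by
  have hξη : ∑ i, pdv g i (q t, deriv q t, t) * ξ t i
      = -∑ i, deriv (fun s => pdv g i (q s, deriv q s, s)) t * η t i := by
    rw [hcomm t]
    exact sum_mul_deriv_eq_neg_sum_deriv_mul (fun i => (differentiable_pdv_along hg hq i) t)
      (hη t) hchet
  simp only [totalVar, hξη, lagD, sub_mul, Finset.sum_sub_distrib]
  ring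

/-- Hölder vakonomic variation: if the commutation rule `ξ = η'` holds and the Chetaev
condition `δ꜀g = 0` holds identically, then `δᵥg(t) = − Σ_i 𝒟ᵢg(t) · η_i(t)`. -/
theorem holder_vakonomic_variation
    (g : (Fin n → ℝ) × (Fin n → ℝ) × ℝ → ℝ) (hg : ContDiff ℝ 2 g)
    (q : ℝ → Fin n → ℝ) (hq : ContDiff ℝ 2 q)
    (η ξ : ℝ → Fin n → ℝ) (hη : Differentiable ℝ η) (hξ : Differentiable ℝ ξ)
    (hcomm : ∀ t : ℝ, ξ t = deriv η t)
    (hchet : ∀ t : ℝ, chetaevVar g q η t = 0)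
    (t : ℝ) :
    totalVar g q η ξ t = - ∑ i, lagD g q i t * η t i :=
  holder_vakonomic_variation_general g hg q hq η ξ hη hcomm hchet t
end

section
/- For every C¹ curve q : ℝ → (Fin n → ℝ), every index i ∈ {1,…,n} and every t ∈ ℝ, the Lagrangian derivative 𝒟ᵢg(t) = (d/dt)[(∂g/∂v_i)(q(t), q'(t), t)] − (∂g/∂x_i)(q(t), q'(t), t) equals 0; that is, the Lagrangian derivative of an exact (integrable) constraint g = df/dt vanishes identically. -/
open BigOperators

variable {n : ℕ}

/-- Partial derivative of `f(x, t)` with respect to `x_j`. -/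
noncomputable def pdfx (f : (Fin n → ℝ) × ℝ → ℝ) (j : Fin n) (p : (Fin n → ℝ) × ℝ) : ℝ :=
  fderiv ℝ f p (Pi.single j 1, 0)

/-- Partial derivative of `f(x, t)` with respect to `t`. -/
noncomputable def pdft (f : (Fin n → ℝ) × ℝ → ℝ) (p : (Fin n → ℝ) × ℝ) : ℝ :=
  fderiv ℝ f p (0, 1)

/-!
Writing `D = fderiv ℝ f`, the exact constraint is `g (x, v, t) = D (x, t) (v, 1)`. Hence
`∂g/∂vᵢ = D (x, t) (eᵢ, 0) = ∂f/∂xᵢ` and `∂g/∂xᵢ = D² (x, t) (eᵢ, 0) (v, 1)`, while along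
the curve `d/dt ∂f/∂xᵢ (q, t) = D² (q, t) (q', 1) (eᵢ, 0)`. The two agree by the symmetry of
the second derivative of a `C²` function.
-/

section

variable {E : Type*} [NormedAddCommGroup E] [NormedSpace ℝ E]

noncomputable def totalTimeDeriv (f : E × ℝ → ℝ) (p : E × E × ℝ) : ℝ :=
  fderiv ℝ f (p.1, p.2.2) (p.2.1, 1)

theorem fderiv_totalTimeDeriv_apply {f : E × ℝ → ℝ} {x v : E} {t : ℝ}
    (hf : DifferentiableAt ℝ (fderiv ℝ f) (x, t)) (a b : E) (c : ℝ) :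
    fderiv ℝ (totalTimeDeriv f) (x, v, t) (a, b, c) =
      fderiv ℝ (fderiv ℝ f) (x, t) (a, c) (v, 1) + fderiv ℝ f (x, t) (b, 0) := by
  have hpos : HasFDerivAt (fun p : E × E × ℝ => (p.1, p.2.2)) _ (x, v, t) :=
    hasFDerivAt_fst.prodMk (hasFDerivAt_snd (𝕜 := ℝ) (p := (x, v, t))).snd
  have hvel : HasFDerivAt (fun p : E × E × ℝ => (p.2.1, (1 : ℝ))) _ (x, v, t) :=
    (hasFDerivAt_snd (𝕜 := ℝ) (p := (x, v, t))).fst.prodMk (hasFDerivAt_const 1 _)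
  have hderiv : HasFDerivAt (totalTimeDeriv f) _ (x, v, t) :=
    (hf.hasFDerivAt.comp (x, v, t) hpos).clm_apply hvel
  rw [hderiv.fderiv]
  simp [add_comm]

end

theorem totalTimeDeriv_eq_sum (f : (Fin n → ℝ) × ℝ → ℝ) (x v : Fin n → ℝ) (t : ℝ) :
    totalTimeDeriv f (x, v, t) = ∑ j, pdfx f j (x, t) * v j + pdft f (x, t) := by
  have hv : ((v, 1) : (Fin n → ℝ) × ℝ) =
      ∑ j, v j • ((Pi.single j 1 : Fin n → ℝ), (0 : ℝ)) + (0, 1) := by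
    ext k
    · simp [Prod.fst_sum, Finset.sum_apply, Pi.single_apply]
    · simp [Prod.snd_sum]
  simp only [totalTimeDeriv, pdfx, pdft]
  rw [hv, map_add, map_sum]
  simp only [map_smul, smul_eq_mul, mul_comm]

theorem pdv_totalTimeDeriv {f : (Fin n → ℝ) × ℝ → ℝ} {x v : Fin n → ℝ} {t : ℝ}
    (hf : DifferentiableAt ℝ (fderiv ℝ f) (x, t)) (i : Fin n) :
    pdv (totalTimeDeriv f) i (x, v, t) = pdfx f i (x, t) := by
  simp [pdv, pdfx, fderiv_totalTimeDeriv_apply hf, Prod.mk_zero_zero]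

theorem pdx_totalTimeDeriv {f : (Fin n → ℝ) × ℝ → ℝ} {x v : Fin n → ℝ} {t : ℝ}
    (hf : DifferentiableAt ℝ (fderiv ℝ f) (x, t)) (i : Fin n) :
    pdx (totalTimeDeriv f) i (x, v, t) =
      fderiv ℝ (fderiv ℝ f) (x, t) (Pi.single i 1, 0) (v, 1) := by
  simp [pdx, fderiv_totalTimeDeriv_apply hf, Prod.mk_zero_zero]

theorem hasDerivAt_pdfx_comp {f : (Fin n → ℝ) × ℝ → ℝ} {q : ℝ → Fin n → ℝ}
    {q' : Fin n → ℝ} {t : ℝ} (hf : DifferentiableAt ℝ (fderiv ℝ f) (q t, t))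
    (hq : HasDerivAt q q' t) (i : Fin n) :
    HasDerivAt (fun s => pdfx f i (q s, s))
      (fderiv ℝ (fderiv ℝ f) (q t, t) (q', 1) (Pi.single i 1, 0)) t := by
  have hcurve : HasDerivAt (fun s => (q s, s)) (q', 1) t := hq.prodMk (hasDerivAt_id t)
  simpa [pdfx] using (hf.hasFDerivAt.comp_hasDerivAt (f := fun s => (q s, s)) t hcurve).clm_apply
    (hasDerivAt_const t _)

/-- The Lagrangian derivative of an exact (integrable) constraint
`g(x, v, t) = Σ_j (∂f/∂x_j)(x,t) v_j + (∂f/∂t)(x,t)` vanishes identically along any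
C¹ curve. -/
theorem lagrangian_derivative_of_exact_constraint_vanishes
    (f : (Fin n → ℝ) × ℝ → ℝ) (hf : ContDiff ℝ 2 f)
    (g : (Fin n → ℝ) × (Fin n → ℝ) × ℝ → ℝ)
    (hg : ∀ (x v : Fin n → ℝ) (t : ℝ),
      g (x, v, t) = ∑ j, pdfx f j (x, t) * v j + pdft f (x, t))
    (q : ℝ → Fin n → ℝ) (hq : ContDiff ℝ 1 q)
    (i : Fin n) (t : ℝ) :
    lagD g q i t = 0 := by
  have hD : Differentiable ℝ (fderiv ℝ f) := (hf.fderiv_right le_rfl).differentiable one_ne_zero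
  obtain rfl : g = totalTimeDeriv f :=
    funext fun ⟨x, v, s⟩ => (hg x v s).trans (totalTimeDeriv_eq_sum f x v s).symm
  have hq' : HasDerivAt q (deriv q t) t := (hq.differentiable one_ne_zero t).hasDerivAt
  rw [lagD, funext fun s => pdv_totalTimeDeriv (hD (q s, s)) i,
    (hasDerivAt_pdfx_comp (hD _) hq' i).deriv, pdx_totalTimeDeriv (hD _),
    (hf.contDiffAt.isSymmSndFDerivAt (by simp)).eq, sub_self]
end

section
/- Let q : ℝ → (Fin n → ℝ) be a C² curve along which the constraint is satisfied, i.e. g(q(t), q'(t), t) = 0 for all t ∈ ℝ. Then for every index i ∈ {1,…,n} and every t ∈ ℝ, φ(q(t), t)·𝒟ᵢg(t) = − (d/dt)[φ(q(t), t)]·(∂g/∂v_i)(q(t), q'(t), t), where 𝒟ᵢg(t) = (d/dt)[(∂g/∂v_i)(q(t), q'(t), t)] − (∂g/∂x_i)(q(t), q'(t), t) is the Lagrangian derivative. -/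
/-! The right-hand side of the integrating-factor relation is `Df(x, t)(v, 1)`. Differentiating
`φ · g = Df(x, t)(v, 1)` in `vᵢ` gives `φ ∂g/∂vᵢ = ∂f/∂xᵢ`, and in `xᵢ`, by symmetry of `D²f`,
`φ ∂g/∂xᵢ + g ∂φ/∂xᵢ = D(∂f/∂xᵢ)(x, t)(v, 1)`. On a motion `g = 0`, so `φ ∂g/∂xᵢ` is the time
derivative of `∂f/∂xᵢ(q, t) = φ ∂g/∂vᵢ`, and the product rule gives the claim. -/

open BigOperators

variable {n : ℕ}

section Calculus

variable {E F : Type*} [NormedAddCommGroup E] [NormedSpace ℝ E]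
  [NormedAddCommGroup F] [NormedSpace ℝ F]

theorem fderiv_fderiv_apply_const {f : E → F} {y : E}
    (hf : DifferentiableAt ℝ (fderiv ℝ f) y) (u w : E) :
    fderiv ℝ (fun z => fderiv ℝ f z u) y w = fderiv ℝ (fderiv ℝ f) y w u := by
  simp [fderiv_clm_apply hf (differentiableAt_const u)]

theorem deriv_comp_prodMk_id {h : E × ℝ → F} {q : ℝ → E} {t : ℝ}
    (hh : DifferentiableAt ℝ h (q t, t)) (hq : DifferentiableAt ℝ q t) :
    deriv (fun s => h (q s, s)) t = fderiv ℝ h (q t, t) (deriv q t, 1) :=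
  (hh.hasFDerivAt.comp_hasDerivAt (f := fun s => (q s, s)) t
    (hq.hasDerivAt.prodMk (hasDerivAt_id' t))).deriv

end Calculus

section IntegratingFactor

variable {E : Type*} [NormedAddCommGroup E] [NormedSpace ℝ E]
  {f φ : E × ℝ → ℝ} {g : E × E × ℝ → ℝ}

theorem fderiv_integrating_factor_identity (hf : Differentiable ℝ (fderiv ℝ f))
    (hφ : Differentiable ℝ φ) (hg : Differentiable ℝ g)
    (hfac : ∀ x v t, φ (x, t) * g (x, v, t) = fderiv ℝ f (x, t) (v, 1))
    (x v : E) (t : ℝ) (w : E × E × ℝ) :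
    φ (x, t) * fderiv ℝ g (x, v, t) w + g (x, v, t) * fderiv ℝ φ (x, t) (w.1, w.2.2)
      = fderiv ℝ (fderiv ℝ f) (x, t) (w.1, w.2.2) (v, 1) + fderiv ℝ f (x, t) (w.2.1, 0) := by
  set p : E × E × ℝ := (x, v, t)
  have hπ : HasFDerivAt (fun p : E × E × ℝ => (p.1, p.2.2)) _ p :=
    hasFDerivAt_fst.prodMk (hasFDerivAt_snd (𝕜 := ℝ)).snd
  have hσ : HasFDerivAt (fun p : E × E × ℝ => (p.2.1, (1 : ℝ))) _ p :=
    (hasFDerivAt_snd (𝕜 := ℝ)).fst.prodMk (hasFDerivAt_const 1 p)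
  have hlhs := ((hφ _).hasFDerivAt.comp p hπ).mul (hg p).hasFDerivAt
  have hrhs := ((hf _).hasFDerivAt.comp p hπ).clm_apply hσ
  have hsame : (fun p : E × E × ℝ => φ (p.1, p.2.2) * g p) =ᶠ[nhds p]
      fun p => fderiv ℝ f (p.1, p.2.2) (p.2.1, 1) :=
    .of_forall fun p => hfac p.1 p.2.1 p.2.2
  simpa [p, add_comm] using congr($(hlhs.unique (hrhs.congr_of_eventuallyEq hsame)) w)

theorem mul_fderiv_velocity_eq (hf : Differentiable ℝ (fderiv ℝ f))
    (hφ : Differentiable ℝ φ) (hg : Differentiable ℝ g)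
    (hfac : ∀ x v t, φ (x, t) * g (x, v, t) = fderiv ℝ f (x, t) (v, 1))
    (x v : E) (t : ℝ) (k : E) :
    φ (x, t) * fderiv ℝ g (x, v, t) (0, k, 0) = fderiv ℝ f (x, t) (k, 0) := by
  simpa [Prod.mk_zero_zero] using fderiv_integrating_factor_identity hf hφ hg hfac x v t (0, k, 0)

theorem mul_fderiv_position_add_eq (hf : ContDiff ℝ 2 f)
    (hφ : Differentiable ℝ φ) (hg : Differentiable ℝ g)
    (hfac : ∀ x v t, φ (x, t) * g (x, v, t) = fderiv ℝ f (x, t) (v, 1))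
    (x v : E) (t : ℝ) (k : E) :
    φ (x, t) * fderiv ℝ g (x, v, t) (k, 0, 0) + g (x, v, t) * fderiv ℝ φ (x, t) (k, 0)
      = fderiv ℝ (fun y => fderiv ℝ f y (k, 0)) (x, t) (v, 1) := by
  have hf' : Differentiable ℝ (fderiv ℝ f) :=
    (hf.fderiv_right (m := 1) (by norm_num)).differentiable one_ne_zero
  rw [fderiv_fderiv_apply_const (hf' _), hf.contDiffAt.isSymmSndFDerivAt (by simp)]
  simpa [Prod.mk_zero_zero] using fderiv_integrating_factor_identity hf' hφ hg hfac x v t (k, 0, 0)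

end IntegratingFactor

theorem sum_pdfx_mul_add_pdft (f : (Fin n → ℝ) × ℝ → ℝ) (x v : Fin n → ℝ) (t : ℝ) :
    ∑ j, pdfx f j (x, t) * v j + pdft f (x, t) = fderiv ℝ f (x, t) (v, 1) := by
  have hv : ((v, 1) : (Fin n → ℝ) × ℝ) = ∑ j, v j • (Pi.single j 1, 0) + (0, 1) := by
    ext <;> simp [Prod.fst_sum, Prod.snd_sum, Finset.sum_apply, Pi.single_apply]
  simp only [hv, map_add, map_sum, map_smul]
  simp [pdfx, pdft, mul_comm]

/-- For a constraint `g` admitting an integrating factor `φ`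
(`φ·g = Σ_j (∂f/∂x_j) v_j + ∂f/∂t`), along any C² motion satisfying the constraint one
has `φ(q(t),t) · 𝒟ᵢg(t) = − (d/dt)[φ(q(t),t)] · (∂g/∂v_i)(q(t), q'(t), t)`. -/
theorem integrating_factor_lagrangian_derivative
    (f : (Fin n → ℝ) × ℝ → ℝ) (hf : ContDiff ℝ 2 f)
    (φ : (Fin n → ℝ) × ℝ → ℝ) (hφ : ContDiff ℝ 1 φ)
    (g : (Fin n → ℝ) × (Fin n → ℝ) × ℝ → ℝ) (hg : ContDiff ℝ 2 g)
    (hfac : ∀ (x v : Fin n → ℝ) (t : ℝ),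
      φ (x, t) * g (x, v, t) = ∑ j, pdfx f j (x, t) * v j + pdft f (x, t))
    (q : ℝ → Fin n → ℝ) (hq : ContDiff ℝ 2 q)
    (hmotion : ∀ t : ℝ, g (q t, deriv q t, t) = 0)
    (i : Fin n) (t : ℝ) :
    φ (q t, t) * lagD g q i t
      = - deriv (fun s => φ (q s, s)) t * pdv g i (q t, deriv q t, t) := by
  have hfac_fderiv : ∀ x v t, φ (x, t) * g (x, v, t) = fderiv ℝ f (x, t) (v, 1) :=
    fun x v t => by rw [hfac, sum_pdfx_mul_add_pdft]
  have hDf : Differentiable ℝ (fderiv ℝ f) :=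
    (hf.fderiv_right (m := 1) (by norm_num)).differentiable one_ne_zero
  have hDg : Differentiable ℝ (fderiv ℝ g) :=
    (hg.fderiv_right (m := 1) (by norm_num)).differentiable one_ne_zero
  have hφ₁ : Differentiable ℝ φ := hφ.differentiable one_ne_zero
  have hg₁ : Differentiable ℝ g := hg.differentiable (by norm_num)
  have hq₁ : Differentiable ℝ q := hq.differentiable (by norm_num)
  have hq'₁ : Differentiable ℝ (deriv q) := (hq.deriv' (n := 1)).differentiable one_ne_zero
  have hpdfx : (fun s => pdfx f i (q s, s)) = fun s => φ (q s, s) * pdv g i (q s, deriv q s, s) :=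
    funext fun s => (mul_fderiv_velocity_eq hDf hφ₁ hg₁ hfac_fderiv _ _ _ _).symm
  have hpdx : φ (q t, t) * pdx g i (q t, deriv q t, t) = deriv (fun s => pdfx f i (q s, s)) t := by
    have h := mul_fderiv_position_add_eq hf hφ₁ hg₁ hfac_fderiv (q t) (deriv q t) t
      (Pi.single i 1)
    rw [hmotion, zero_mul, add_zero] at h
    rw [deriv_comp_prodMk_id (h := pdfx f i) ((hDf _).clm_apply (differentiableAt_const _))
      (hq₁ t)]
    exact h
  have hprod : deriv (fun s => φ (q s, s) * pdv g i (q s, deriv q s, s)) t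
      = deriv (fun s => φ (q s, s)) t * pdv g i (q t, deriv q t, t)
        + φ (q t, t) * deriv (fun s => pdv g i (q s, deriv q s, s)) t :=
    deriv_fun_mul (by fun_prop) (by unfold pdv; fun_prop)
  rw [hpdfx, hprod] at hpdx
  rw [lagD]
  linarith
end

section
/- Let q : ℝ → (Fin n → ℝ) be a C² curve along which the constraint is satisfied, i.e. g(q(t), q'(t), t) = 0 for all t ∈ ℝ. Fix t ∈ ℝ with φ(q(t), t) ≠ 0, and let η ∈ (Fin n → ℝ) be a virtual displacement satisfying the Chetaev condition Σ_{i=1}^{n} (∂g/∂v_i)(q(t), q'(t), t)·η_i = 0. Then Σ_{i=1}^{n} 𝒟ᵢg(t)·η_i = 0, where 𝒟ᵢg(t) = (d/dt)[(∂g/∂v_i)(q(t), q'(t), t)] − (∂g/∂x_i)(q(t), q'(t), t) is the Lagrangian derivative. -/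
open BigOperators

variable {n : ℕ}

/-!
Write the integrating-factor identity as `φ(x, t) g(x, v, t) = Df(x, t)(v, 1)` and differentiate it.
In `v` it gives `φ ∂g/∂vᵢ = ∂f/∂xᵢ`; in `x`, at a point of the motion (where `g = 0`), it gives
`φ ∂g/∂xᵢ = D²f(eᵢ, 0)(q̇, 1)`. Differentiating the first along the motion and using the symmetry of
`D²f` yields `φ 𝒟ᵢg = -φ̇ ∂g/∂vᵢ`, so `Σ 𝒟ᵢg ηᵢ` is a multiple of the Chetaev sum.
-/

theorem ContinuousLinearMap.apply_prod_eq_sum (L : (Fin n → ℝ) × ℝ →L[ℝ] ℝ)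
    (v : Fin n → ℝ) (s : ℝ) : L (v, s) = ∑ j, L (Pi.single j 1, 0) * v j + L (0, 1) * s := by
  have hv : ((v, s) : (Fin n → ℝ) × ℝ) = ∑ j, v j • (Pi.single j 1, 0) + s • (0, 1) := by
    ext k <;> simp [Prod.fst_sum, Prod.snd_sum, Finset.sum_apply, Pi.single_apply]
  simp only [hv, map_add, map_sum, map_smul, smul_eq_mul, mul_comm]

theorem fderiv_apply_eq_sum_pdfx_add_pdft (f : (Fin n → ℝ) × ℝ → ℝ) (x v : Fin n → ℝ) (t : ℝ) :
    fderiv ℝ f (x, t) (v, 1) = ∑ j, pdfx f j (x, t) * v j + pdft f (x, t) := by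
  simpa [pdfx, pdft] using (fderiv ℝ f (x, t)).apply_prod_eq_sum v 1

theorem integratingFactor_fderiv_identity {E : Type*} [NormedAddCommGroup E] [NormedSpace ℝ E]
    {f φ : E × ℝ → ℝ} {g : E × E × ℝ → ℝ}
    (hfac : ∀ x v t, φ (x, t) * g (x, v, t) = fderiv ℝ f (x, t) (v, 1))
    {x v : E} {t : ℝ} (hφ : DifferentiableAt ℝ φ (x, t)) (hg : DifferentiableAt ℝ g (x, v, t))
    (hf : DifferentiableAt ℝ (fderiv ℝ f) (x, t)) (dx dv : E) (dt : ℝ) :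
    fderiv ℝ φ (x, t) (dx, dt) * g (x, v, t) + φ (x, t) * fderiv ℝ g (x, v, t) (dx, dv, dt) =
      fderiv ℝ (fderiv ℝ f) (x, t) (dx, dt) (v, 1) + fderiv ℝ f (x, t) (dv, 0) := by
  have hX : HasDerivAt (fun s : ℝ => x + s • dx) dx 0 := by
    simpa using ((hasDerivAt_id (0 : ℝ)).smul_const dx).const_add x
  have hV : HasDerivAt (fun s : ℝ => v + s • dv) dv 0 := by
    simpa using ((hasDerivAt_id (0 : ℝ)).smul_const dv).const_add v
  have hT : HasDerivAt (fun s : ℝ => t + s * dt) dt 0 := by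
    simpa using ((hasDerivAt_id (0 : ℝ)).mul_const dt).const_add t
  have hlhs := (hφ.hasFDerivAt.comp_hasDerivAt_of_eq 0 (hX.prodMk hT) (by simp)).fun_mul
    (hg.hasFDerivAt.comp_hasDerivAt_of_eq 0 (hX.prodMk (hV.prodMk hT)) (by simp))
  have hrhs := (hf.hasFDerivAt.comp_hasDerivAt_of_eq 0 (hX.prodMk hT) (by simp)).clm_apply
    (hV.prodMk (hasDerivAt_const 0 (1 : ℝ)))
  simp only [Function.comp_apply, hfac] at hlhs
  simpa using hlhs.unique hrhs

theorem mul_lagD_eq_neg_deriv_mul_pdv {f φ : (Fin n → ℝ) × ℝ → ℝ}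
    {g : (Fin n → ℝ) × (Fin n → ℝ) × ℝ → ℝ} {q : ℝ → Fin n → ℝ} {t : ℝ}
    (hfac : ∀ x v t, φ (x, t) * g (x, v, t) = fderiv ℝ f (x, t) (v, 1))
    (hf : ContDiff ℝ 2 f) (hφ : Differentiable ℝ φ) (hg : ContDiff ℝ 2 g) (hq : ContDiff ℝ 2 q)
    (hmotion : g (q t, deriv q t, t) = 0) (i : Fin n) :
    φ (q t, t) * lagD g q i t = -deriv (fun s => φ (q s, s)) t * pdv g i (q t, deriv q t, t) := by
  have hf' : Differentiable ℝ (fderiv ℝ f) := (hf.fderiv_right le_rfl).differentiable one_ne_zero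
  have hg' : Differentiable ℝ (fderiv ℝ g) := (hg.fderiv_right le_rfl).differentiable one_ne_zero
  have hqd : Differentiable ℝ q := hq.differentiable two_ne_zero
  have hq' : Differentiable ℝ (deriv q) := (hq.deriv' (n := 1)).differentiable one_ne_zero
  have hdiff := fun s : ℝ => integratingFactor_fderiv_identity hfac (hφ (q s, s))
    ((hg.differentiable two_ne_zero) (q s, deriv q s, s)) (hf' (q s, s))
  have hvel (s : ℝ) : φ (q s, s) * pdv g i (q s, deriv q s, s) = pdfx f i (q s, s) := by
    simpa [pdv, pdfx, Prod.mk_zero_zero] using hdiff s 0 (Pi.single i 1) 0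
  have hpos : φ (q t, t) * pdx g i (q t, deriv q t, t) =
      fderiv ℝ (fderiv ℝ f) (q t, t) (Pi.single i 1, 0) (deriv q t, 1) := by
    simpa [pdx, hmotion, Prod.mk_zero_zero] using hdiff t (Pi.single i 1) 0 0
  have hsymm := (hf.contDiffAt (x := (q t, t))).isSymmSndFDerivAt (by simp)
  have hcurve : HasDerivAt (fun s => (q s, s)) (deriv q t, 1) t :=
    (hqd t).hasDerivAt.prodMk (hasDerivAt_id t)
  have hpdfx : HasDerivAt (fun s => pdfx f i (q s, s))
      (fderiv ℝ (fderiv ℝ f) (q t, t) (deriv q t, 1) (Pi.single i 1, 0)) t :=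
    ((hf' (q t, t)).hasFDerivAt.comp_hasDerivAt (f := fun s => (q s, s)) t hcurve).clm_apply
      (hasDerivAt_const t (Pi.single i 1, 0)) |>.congr_deriv (by simp)
  have hprod : HasDerivAt (fun s => φ (q s, s) * pdv g i (q s, deriv q s, s))
      (deriv (fun s => φ (q s, s)) t * pdv g i (q t, deriv q t, t) +
        φ (q t, t) * deriv (fun s => pdv g i (q s, deriv q s, s)) t) t := by
    refine HasDerivAt.fun_mul ?_ ?_ <;> apply DifferentiableAt.hasDerivAt
    · fun_prop
    · unfold pdv; fun_prop
  simp only [hvel] at hprod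
  rw [lagD, mul_sub, hpos, ← hsymm]
  linear_combination hprod.unique hpdfx

/-- For a constraint `g` admitting an integrating factor `φ`, along a C² motion
satisfying the constraint, at any instant where `φ ≠ 0` the sum `Σ_i 𝒟ᵢg(t) · η_i`
vanishes for every virtual displacement `η` satisfying the Chetaev condition. -/
theorem integrating_factor_chetaev_sum_vanishes
    (f : (Fin n → ℝ) × ℝ → ℝ) (hf : ContDiff ℝ 2 f)
    (φ : (Fin n → ℝ) × ℝ → ℝ) (hφ : ContDiff ℝ 1 φ)
    (g : (Fin n → ℝ) × (Fin n → ℝ) × ℝ → ℝ) (hg : ContDiff ℝ 2 g)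
    (hfac : ∀ (x v : Fin n → ℝ) (t : ℝ),
      φ (x, t) * g (x, v, t) = ∑ j, pdfx f j (x, t) * v j + pdft f (x, t))
    (q : ℝ → Fin n → ℝ) (hq : ContDiff ℝ 2 q)
    (hmotion : ∀ t : ℝ, g (q t, deriv q t, t) = 0)
    (t : ℝ) (hφ0 : φ (q t, t) ≠ 0)
    (η : Fin n → ℝ)
    (hchet : ∑ i, pdv g i (q t, deriv q t, t) * η i = 0) :
    ∑ i, lagD g q i t * η i = 0 := by
  have hfac' (x v : Fin n → ℝ) (t : ℝ) : φ (x, t) * g (x, v, t) = fderiv ℝ f (x, t) (v, 1) := by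
    rw [hfac, fderiv_apply_eq_sum_pdfx_add_pdft]
  have hlagD := mul_lagD_eq_neg_deriv_mul_pdv hfac' hf (hφ.differentiable one_ne_zero) hg hq
    (hmotion t)
  refine (mul_eq_zero.mp ?_).resolve_left hφ0
  calc φ (q t, t) * ∑ i, lagD g q i t * η i
      = -deriv (fun s => φ (q s, s)) t * ∑ i, pdv g i (q t, deriv q t, t) * η i := by
        simp only [Finset.mul_sum, ← mul_assoc, hlagD]
    _ = 0 := by rw [hchet, mul_zero]
end

section
/- Let n ≥ 2 and let a ∈ Matrix (Fin (n−1)) (Fin n) ℝ be a matrix whose n−1 rows are linearly independent (rank n−1). Then for every skew-symmetric matrix A ∈ Matrix (Fin n) (Fin n) ℝ and all vectors v, δ ∈ (Fin n → ℝ) satisfying Σ_{j=1}^{n} a_{ν,j}·v_j = 0 for all ν ∈ {1,…,n−1} and Σ_{j=1}^{n} a_{ν,j}·δ_j = 0 for all ν ∈ {1,…,n−1}, one has Σ_{i=1}^{n} Σ_{j=1}^{n} A_{i,j}·v_j·δ_i = 0. (In the case of κ = n−1 constraints the dynamic consistency property holds regardless of the form of the constraints.) -/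
/-!
The constraint rows are `n - 1` independent vectors in `ℝⁿ`, so their common kernel, which
contains both `v` and `δ`, is at most a line. Writing `v = s • w` and `δ = t • w`, the sum is
`s t · wᵀ A w`, and a skew-symmetric form vanishes on the diagonal.
-/

open Matrix

namespace Matrix

variable {K m n : Type*} [Field K] [Fintype m] [Fintype n]

theorem finrank_ker_mulVecLin_of_linearIndependent_row {a : Matrix m n K}
    (ha : LinearIndependent K a.row) :
    Module.finrank K (LinearMap.ker a.mulVecLin) = Fintype.card n - Fintype.card m := by
  have h := LinearMap.finrank_range_add_finrank_ker a.mulVecLin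
  rw [← Matrix.rank, ha.rank_matrix, Module.finrank_fintype_fun_eq_card] at h
  omega

theorem dotProduct_mulVec_self_eq_zero_of_transpose_eq_neg [NeZero (2 : K)]
    {A : Matrix n n K} (hA : Aᵀ = -A) (v : n → K) : v ⬝ᵥ A *ᵥ v = 0 := by
  have h : v ⬝ᵥ A *ᵥ v = -(v ⬝ᵥ A *ᵥ v) := calc
    v ⬝ᵥ A *ᵥ v = Aᵀ *ᵥ v ⬝ᵥ v := by rw [dotProduct_mulVec, mulVec_transpose]
    _ = -(v ⬝ᵥ A *ᵥ v) := by rw [hA, neg_mulVec, neg_dotProduct, dotProduct_comm]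
  have h2 : (2 : K) * (v ⬝ᵥ A *ᵥ v) = 0 := by linear_combination h
  exact (mul_eq_zero.mp h2).resolve_left two_ne_zero

theorem dotProduct_mulVec_eq_zero_of_finrank_le_one [NeZero (2 : K)]
    {A : Matrix n n K} (hA : Aᵀ = -A) {W : Submodule K (n → K)}
    (hW : Module.finrank K W ≤ 1) {v w : n → K} (hv : v ∈ W) (hw : w ∈ W) :
    w ⬝ᵥ A *ᵥ v = 0 := by
  obtain ⟨u, hu⟩ := finrank_le_one_iff.mp hW
  obtain ⟨s, hs⟩ := hu ⟨v, hv⟩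
  obtain ⟨t, ht⟩ := hu ⟨w, hw⟩
  have hvu : v = s • (u : n → K) := congrArg Subtype.val hs.symm
  have hwu : w = t • (u : n → K) := congrArg Subtype.val ht.symm
  simp only [hvu, hwu, mulVec_smul, dotProduct_smul, smul_dotProduct,
    dotProduct_mulVec_self_eq_zero_of_transpose_eq_neg hA, smul_zero]

end Matrix

theorem high_constraint_case_general
    (n : ℕ)
    (a : Matrix (Fin (n - 1)) (Fin n) ℝ)
    (ha : LinearIndependent ℝ (fun ν : Fin (n - 1) => a ν))
    (A : Matrix (Fin n) (Fin n) ℝ)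
    (hA : ∀ i j : Fin n, A j i = -A i j)
    (v δ : Fin n → ℝ)
    (hv : ∀ ν : Fin (n - 1), ∑ j, a ν j * v j = 0)
    (hδ : ∀ ν : Fin (n - 1), ∑ j, a ν j * δ j = 0) :
    ∑ i, ∑ j, A i j * v j * δ i = 0 := by
  have hskew : Aᵀ = -A := Matrix.ext hA
  have hline : Module.finrank ℝ (LinearMap.ker a.mulVecLin) ≤ 1 := by
    rw [finrank_ker_mulVecLin_of_linearIndependent_row ha, Fintype.card_fin, Fintype.card_fin]
    omega
  have hform := dotProduct_mulVec_eq_zero_of_finrank_le_one hskew hline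
    (v := v) (w := δ) (funext hv) (funext hδ)
  rw [← hform]
  simp only [dotProduct, mulVec, Finset.mul_sum]
  exact Finset.sum_congr rfl fun i _ => Finset.sum_congr rfl fun j _ => by ring

/-- With `κ = n − 1` independent linear constraints, the dynamic consistency property
holds regardless of the form of the constraints: for any skew-symmetric matrix `A` and
any vectors `v, δ` annihilated by all the constraint rows, `Σ_{i,j} A_{i,j} v_j δ_i = 0`. -/
theorem high_constraint_case
    (n : ℕ) (hn : 2 ≤ n)
    (a : Matrix (Fin (n - 1)) (Fin n) ℝ)
    (ha : LinearIndependent ℝ (fun ν : Fin (n - 1) => a ν))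
    (A : Matrix (Fin n) (Fin n) ℝ)
    (hA : ∀ i j : Fin n, A j i = -A i j)
    (v δ : Fin n → ℝ)
    (hv : ∀ ν : Fin (n - 1), ∑ j, a ν j * v j = 0)
    (hδ : ∀ ν : Fin (n - 1), ∑ j, a ν j * δ j = 0) :
    ∑ i, ∑ j, A i j * v j * δ i = 0 :=
  high_constraint_case_general n a ha A hA v δ hv hδ
end

section
/- Let a, c ∈ (Fin 3 → ℝ) with a ≠ 0. Then the following are equivalent: (i) for every vector v ∈ (Fin 3 → ℝ) with ⟨a, v⟩ = 0 there exists ρ ∈ ℝ such that c ×₃ v = ρ • a; (ii) ⟨a, c⟩ = 0. (With c playing the role of the curl ∇ ∧ a₁ of the constraint field a₁ at a point, this says that for a single linear constraint in ℝ³ the vector (∇ ∧ a₁) ∧ q̇ can be proportional to a₁ for all admissible velocities q̇ if and only if a₁ · (∇ ∧ a₁) = 0.) -/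
/-!
Everything follows from the expansion `a ⨯₃ (c ⨯₃ v) = (a ⬝ᵥ v) • c - (a ⬝ᵥ c) • v`, which for
`a ⬝ᵥ v = 0` reads `-(a ⬝ᵥ c) • v`. If `a ⬝ᵥ c = 0`, then `c ⨯₃ v` lies in the kernel of
`a ⨯₃ ·`, which is the line through `a`. Conversely, if `c ⨯₃ v` is a multiple of `a` the left
side vanishes, so `(a ⬝ᵥ c) • v = 0` for every `v ⊥ a`, and in dimension three such a `v` can be
chosen nonzero.
-/

open BigOperators Matrix

noncomputable def cross3 (u v : Fin 3 → ℝ) : Fin 3 → ℝ :=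
  ![u 1 * v 2 - u 2 * v 1, u 2 * v 0 - u 0 * v 2, u 0 * v 1 - u 1 * v 0]

section CrossProduct

variable {K : Type*} [Field K]

theorem eq_smul_of_cross_eq_zero {a w : Fin 3 → K} (ha : a ⬝ᵥ a ≠ 0) (h : a ⨯₃ w = 0) :
    w = (a ⬝ᵥ w / a ⬝ᵥ a) • a := by
  have hw : (a ⬝ᵥ a) • w = (a ⬝ᵥ w) • a := by
    rw [eq_comm, ← sub_eq_zero, ← cross_cross_eq_smul_sub_smul', h, map_zero]
  rw [div_eq_inv_mul, mul_smul, ← hw, inv_smul_smul₀ ha]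

theorem exists_cross_eq_smul_of_dotProduct_eq_zero {a c v : Fin 3 → K} (ha : a ⬝ᵥ a ≠ 0)
    (hc : a ⬝ᵥ c = 0) (hv : a ⬝ᵥ v = 0) : ∃ ρ : K, c ⨯₃ v = ρ • a := by
  refine ⟨_, eq_smul_of_cross_eq_zero ha ?_⟩
  rw [cross_cross_eq_smul_sub_smul', hv, dotProduct_comm, hc, zero_smul, zero_smul, sub_zero]

theorem dotProduct_eq_zero_of_cross_eq_smul {a c v : Fin 3 → K} {ρ : K} (hv0 : v ≠ 0)
    (hv : a ⬝ᵥ v = 0) (h : c ⨯₃ v = ρ • a) : a ⬝ᵥ c = 0 := by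
  have hcv : (a ⬝ᵥ c) • v = 0 := by
    have expand := cross_cross_eq_smul_sub_smul' a c v
    rwa [h, map_smul, cross_self, smul_zero, hv, zero_smul, zero_sub, eq_comm, neg_eq_zero,
      dotProduct_comm] at expand
  exact (smul_eq_zero.mp hcv).resolve_right hv0

end CrossProduct

/-- For a single linear constraint in `ℝ³` with coefficient vector `a ≠ 0` and a vector
`c` (playing the role of `∇ ∧ a`): the vector `c ×₃ v` is proportional to `a` for all
admissible velocities `v` (those with `⟨a, v⟩ = 0`) if and only if `⟨a, c⟩ = 0`. -/
theorem curl_cross_proportional_iff_orthogonal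
    (a c : Fin 3 → ℝ) (ha : a ≠ 0) :
    (∀ v : Fin 3 → ℝ, (∑ i, a i * v i = 0) → ∃ ρ : ℝ, cross3 c v = ρ • a)
      ↔ ∑ i, a i * c i = 0 := by
  change (∀ v, a ⬝ᵥ v = 0 → ∃ ρ : ℝ, c ⨯₃ v = ρ • a) ↔ a ⬝ᵥ c = 0
  constructor
  · intro h
    obtain ⟨v, hv0, hva⟩ := exists_ne_zero_dotProduct_eq_zero a
    have hv : a ⬝ᵥ v = 0 := by rwa [dotProduct_comm]
    obtain ⟨ρ, hρ⟩ := h v hv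
    exact dotProduct_eq_zero_of_cross_eq_smul hv0 hv hρ
  · intro hc v hv
    exact exists_cross_eq_smul_of_dotProduct_eq_zero (dotProduct_self_eq_zero.not.mpr ha) hc hv
end
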